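/- Let n ≥ 1 and let π be a B_n-partition without zero-block consisting of k ≥ 1 block pairs of sizes i₁, i₂, …, i_k listed in any order. Then the total number N^D(π) of B_n-partitions without zero-block that intersect π minimally equals N^D(π) = ( (∏_{α=1}^k i_α!) / √e ) · [x^i] exp( (1/2) ∏_{α=1}^k (1+x_α)² ), where the exponential is interpreted as the convergent series Σ_{j≥0} (1/(2j)!!) ∏_{α=1}^k (1+x_α)^{2j} and [x^i] denotes the coefficient of ∏_{α=1}^k x_α^{i_α}; equivalently N^D(π) = ( (∏_{α=1}^k i_α!) / √e ) · Σ_{j≥0} (1/(2j)!!) ∏_{α=1}^k C(2j, i_α), where C(m, i) is the binomial coefficient. -/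

import Mathlib

/-!
Fix `j` and distribute `[±n]` over `2j` boxes `±1, …, ±j` symmetrically (box `-s` holds the
negatives of box `s`) so that no box receives two elements of one block of `π`. Placing the
elements of one block from each pair `{B, -B}` of `π` independently and injectively, there are
`∏ (2j)_{i_α}` such placements. On the other hand the nonempty boxes form a zero-block-free
`Bₙ`-partition `π'` meeting `π` minimally, and the placements inducing a given `π'` with `m`
block pairs are the injections of its block pairs into the `j` box pairs together with an
orientation of each pair: there are `2^m (j)_m` of them. Since `∑_j 2^m (j)_m / (2^j j!) = √e`
for every `m`, dividing by `2^j j! = (2j)!!` and summing over `j` counts every `π'` with weight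
`√e`. Finally `(2j)_i = i! C(2j, i)`, and `∏ C(2j, i_α)` is the coefficient of `x^i` in
`∏ (1 + x_α)^{2j}`.
-/


open scoped BigOperators

/-- The ground set `[±n] = {±1, …, ±n}`. -/
noncomputable def pmSet (n : ℕ) : Finset ℤ := (Finset.Icc (-(n : ℤ)) n).erase 0

/-- The block `-B` obtained by negating all elements of `B`. -/
def negBlock (B : Finset ℤ) : Finset ℤ := B.image (fun x => -x)

/-- `π` is a set partition of `[±n]` of type `Bₙ`. -/
def IsBnPartition (n : ℕ) (π : Finset (Finset ℤ)) : Prop :=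
  (∀ B ∈ π, B ≠ ∅) ∧ (∀ B ∈ π, B ⊆ pmSet n) ∧
  (∀ x ∈ pmSet n, ∃! B, B ∈ π ∧ x ∈ B) ∧
  (∀ B ∈ π, negBlock B ∈ π) ∧
  (π.filter (fun B => negBlock B = B)).card ≤ 1

/-- The minimal `Bₙ`-partition `0̂ᴮ`, whose blocks are singletons. -/
noncomputable def botB (n : ℕ) : Finset (Finset ℤ) := (pmSet n).image (fun x => ({x} : Finset ℤ))

/-- Common refinement (meet) of two partitions: all nonempty pairwise intersections. -/
def meetB (π π' : Finset (Finset ℤ)) : Finset (Finset ℤ) :=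
  ((π ×ˢ π').image (fun p => p.1 ∩ p.2)).filter (fun B => B ≠ ∅)

/-- `π` and `π'` intersect minimally. -/
def MinInt (n : ℕ) (π π' : Finset (Finset ℤ)) : Prop := meetB π π' = botB n

/-- Common refinement of a family of partitions of `[±n]`. -/
noncomputable def meetFamily (n : ℕ) {r : ℕ} (πs : Fin r → Finset (Finset ℤ)) : Finset (Finset ℤ) :=
  (List.ofFn πs).foldl meetB {pmSet n}

/-- The family `πs` is minimally intersecting. -/
def MinIntFam (n : ℕ) {r : ℕ} (πs : Fin r → Finset (Finset ℤ)) : Prop :=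
  meetFamily n πs = botB n

/-- `π` has a zero-block of half-size `i₀` (with `i₀ = 0` meaning no zero-block). -/
def zeroBlockHalfSize (π : Finset (Finset ℤ)) (i₀ : ℕ) : Prop :=
  ((π.filter (fun B => negBlock B = B)).sum Finset.card) = 2 * i₀

/-- The block pairs of `π` have sizes `i 0, …, i (k-1)`, listed in any order:
the multiset of sizes of non-zero-blocks is the double of the multiset of the `i α`. -/
def blockPairSizes (π : Finset (Finset ℤ)) {k : ℕ} (i : Fin k → ℕ) : Prop :=
  ((π.filter (fun B => negBlock B ≠ B)).val.map Finset.card)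
    = ((List.ofFn i : List ℕ) : Multiset ℕ) + ((List.ofFn i : List ℕ) : Multiset ℕ)

/-- `π` has exactly `l` block pairs. -/
def numBlockPairs (π : Finset (Finset ℤ)) (l : ℕ) : Prop :=
  (π.filter (fun B => negBlock B ≠ B)).card = 2 * l

/-- `π` has no zero-block. -/
def NoZeroBlock (π : Finset (Finset ℤ)) : Prop := ∀ B ∈ π, negBlock B ≠ B

/-- Falling factorial `(x)ₙ = x (x-1) ⋯ (x-n+1)` of a real number. -/
noncomputable def ffall (x : ℝ) (n : ℕ) : ℝ := ∏ i ∈ Finset.range n, (x - i)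

open Finset

theorem MvPolynomial.coeff_prod_one_add_X_pow {σ R : Type*} [CommSemiring R] [Fintype σ]
    [DecidableEq σ] (m : σ → ℕ) (d : σ →₀ ℕ) :
    coeff d (∏ α, (1 + X α : MvPolynomial σ R) ^ m α)
      = ∏ α, ((m α).choose (d α) : R) := by
  have binomial (α : σ) : (1 + X α : MvPolynomial σ R) ^ m α
      = ∑ t ∈ range (m α + 1), monomial (Finsupp.single α t) ((m α).choose t : R) := by
    rw [add_comm, add_pow]
    refine sum_congr rfl fun t _ => ?_
    rw [one_pow, mul_one, mul_comm, ← C_mul_X_pow_eq_monomial, ← map_natCast C]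
  have exponent (t : σ → ℕ) : ∑ α, Finsupp.single α (t α) = d ↔ t = d := by
    rw [← Finsupp.equivFunOnFinite_symm_eq_sum, Equiv.symm_apply_eq]
    rfl
  simp_rw [binomial, prod_univ_sum, coeff_sum, ← monomial_sum_prod, coeff_monomial, exponent,
    sum_ite_eq', Fintype.mem_piFinset, mem_range, Nat.lt_succ_iff]
  split_ifs with hd
  · rfl
  · obtain ⟨α, hα⟩ := not_forall.1 hd
    refine (prod_eq_zero (mem_univ α) ?_).symm
    rw [Nat.choose_eq_zero_of_lt (not_le.1 hα), Nat.cast_zero]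

theorem hasSum_descFactorial_mul_pow_div_factorial (x : ℝ) (m : ℕ) :
    HasSum (fun j => (j.descFactorial m : ℝ) * x ^ j / j.factorial) (x ^ m * Real.exp x) := by
  have shifted : (fun l => ((l + m).descFactorial m : ℝ) * x ^ (l + m) / (l + m).factorial)
      = fun l => x ^ m * (x ^ l / l.factorial) := by
    funext l
    have h := Nat.factorial_mul_descFactorial (Nat.le_add_left m l)
    rw [Nat.add_sub_cancel] at h
    rw [← h]
    push_cast
    field_simp
    ring
  have vanish : ∑ j ∈ range m, (j.descFactorial m : ℝ) * x ^ j / j.factorial = 0 :=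
    sum_eq_zero fun j hj => by
      rw [Nat.descFactorial_eq_zero_iff_lt.2 (mem_range.1 hj), Nat.cast_zero, zero_mul, zero_div]
  rw [← add_zero (x ^ m * Real.exp x), ← vanish, ← hasSum_nat_add_iff, shifted,
    Real.exp_eq_exp_ℝ]
  exact (NormedSpace.expSeries_div_hasSum_exp x).mul_left _

lemma mem_negBlock {B : Finset ℤ} {x : ℤ} : x ∈ negBlock B ↔ -x ∈ B := by
  simp [negBlock, neg_eq_iff_eq_neg]

@[simp]
lemma negBlock_negBlock (B : Finset ℤ) : negBlock (negBlock B) = B := by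
  ext x; simp [mem_negBlock]

lemma negBlock_injective : Function.Injective negBlock :=
  Function.LeftInverse.injective negBlock_negBlock

@[simp]
lemma negBlock_empty : negBlock ∅ = ∅ := rfl

@[simp]
lemma negBlock_eq_empty {B : Finset ℤ} : negBlock B = ∅ ↔ B = ∅ :=
  negBlock_injective.eq_iff' negBlock_empty

lemma card_negBlock (B : Finset ℤ) : #(negBlock B) = #B :=
  card_image_of_injective _ neg_injective

lemma neg_mem_pmSet {n : ℕ} {x : ℤ} : -x ∈ pmSet n ↔ x ∈ pmSet n := by
  simp only [pmSet, mem_erase, mem_Icc]; omega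

lemma negBlock_subset_pmSet {n : ℕ} {B : Finset ℤ} (h : B ⊆ pmSet n) :
    negBlock B ⊆ pmSet n :=
  fun _ hx => neg_mem_pmSet.1 (h (mem_negBlock.1 hx))

section

variable {n : ℕ} {π π' : Finset (Finset ℤ)} {B B' C : Finset ℤ}

namespace IsBnPartition

lemma ne_empty (hπ : IsBnPartition n π) (hB : B ∈ π) : B ≠ ∅ := hπ.1 B hB

lemma subset_pmSet (hπ : IsBnPartition n π) (hB : B ∈ π) : B ⊆ pmSet n := hπ.2.1 B hB

lemma existsUnique_mem (hπ : IsBnPartition n π) {x : ℤ} (hx : x ∈ pmSet n) :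
    ∃! B, B ∈ π ∧ x ∈ B :=
  hπ.2.2.1 x hx

lemma negBlock_mem (hπ : IsBnPartition n π) (hB : B ∈ π) : negBlock B ∈ π :=
  hπ.2.2.2.1 B hB

lemma eq_of_mem_of_mem (hπ : IsBnPartition n π) (hB : B ∈ π) (hC : C ∈ π) {x : ℤ}
    (hxB : x ∈ B) (hxC : x ∈ C) : B = C :=
  (hπ.existsUnique_mem (hπ.subset_pmSet hB hxB)).unique ⟨hB, hxB⟩ ⟨hC, hxC⟩

lemma disjoint_negBlock (hπ : IsBnPartition n π) (hz : NoZeroBlock π) (hB : B ∈ π) :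
    Disjoint B (negBlock B) :=
  disjoint_left.2 fun _ hx hx' => hz B hB (hπ.eq_of_mem_of_mem (hπ.negBlock_mem hB) hB hx' hx)

lemma minInt_iff (hπ : IsBnPartition n π) (hπ' : IsBnPartition n π') :
    MinInt n π π' ↔ ∀ B ∈ π, ∀ C ∈ π', #(B ∩ C) ≤ 1 := by
  have mem_meetB {D : Finset ℤ} :
      D ∈ meetB π π' ↔ (∃ B ∈ π, ∃ C ∈ π', B ∩ C = D) ∧ D ≠ ∅ := by
    simp [meetB, and_assoc]
  have mem_botB {D : Finset ℤ} : D ∈ botB n ↔ ∃ x ∈ pmSet n, {x} = D := by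
    simp [botB]
  constructor
  · intro h B hB C hC
    by_contra! hlt
    have hne : B ∩ C ≠ ∅ := fun he => by simp [he] at hlt
    obtain ⟨x, -, hx⟩ := mem_botB.1 (h ▸ mem_meetB.2 ⟨⟨B, hB, C, hC, rfl⟩, hne⟩)
    simp [← hx] at hlt
  · intro h
    ext D
    rw [mem_meetB, mem_botB]
    constructor
    · rintro ⟨⟨B, hB, C, hC, rfl⟩, hne⟩
      obtain ⟨x, hx⟩ := card_eq_one.1 <|
        le_antisymm (h B hB C hC) (nonempty_iff_ne_empty.2 hne).card_pos
      have hxB : x ∈ B := (mem_inter.1 (hx ▸ mem_singleton_self x)).1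
      exact ⟨x, hπ.subset_pmSet hB hxB, hx.symm⟩
    · rintro ⟨x, hx, rfl⟩
      obtain ⟨B, ⟨hB, hxB⟩, -⟩ := hπ.existsUnique_mem hx
      obtain ⟨C, ⟨hC, hxC⟩, -⟩ := hπ'.existsUnique_mem hx
      have hxBC : x ∈ B ∩ C := mem_inter.2 ⟨hxB, hxC⟩
      have hBC : B ∩ C = {x} := eq_singleton_iff_unique_mem.2
        ⟨hxBC, fun y hy => card_le_one.1 (h B hB C hC) y hy x hxBC⟩
      exact ⟨⟨B, hB, C, hC, hBC⟩, singleton_ne_empty x⟩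

end IsBnPartition

def IsPosBlock (B : Finset ℤ) : Prop := B.min < (negBlock B).min

lemma IsPosBlock.not_negBlock (h : IsPosBlock B) : ¬ IsPosBlock (negBlock B) := by
  rw [IsPosBlock, negBlock_negBlock]
  exact h.asymm

lemma isPosBlock_or_negBlock (hne : B.Nonempty) (hd : Disjoint B (negBlock B)) :
    IsPosBlock B ∨ IsPosBlock (negBlock B) := by
  rw [IsPosBlock, IsPosBlock, negBlock_negBlock]
  refine lt_or_gt_of_ne fun h => ?_
  obtain ⟨a, ha⟩ := min_of_nonempty hne
  exact disjoint_left.1 hd (mem_of_min ha) (mem_of_min (h ▸ ha))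

open Classical in
noncomputable def posBlocks (π : Finset (Finset ℤ)) : Finset (Finset ℤ) := π.filter IsPosBlock

lemma mem_posBlocks : B ∈ posBlocks π ↔ B ∈ π ∧ IsPosBlock B := by
  classical exact mem_filter

lemma posBlocks_subset : posBlocks π ⊆ π := fun _ h => (mem_posBlocks.1 h).1

lemma ne_negBlock_of_mem_posBlocks (hB : B ∈ posBlocks π) (hB' : B' ∈ posBlocks π) :
    B ≠ negBlock B' := by
  rintro rfl
  exact (mem_posBlocks.1 hB').2.not_negBlock (mem_posBlocks.1 hB).2

namespace IsBnPartition

lemma exists_mem_posBlocks (hπ : IsBnPartition n π) (hz : NoZeroBlock π) (hC : C ∈ π) :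
    ∃ B ∈ posBlocks π, C = B ∨ C = negBlock B := by
  rcases isPosBlock_or_negBlock (nonempty_iff_ne_empty.2 (hπ.ne_empty hC))
    (hπ.disjoint_negBlock hz hC) with h | h
  · exact ⟨C, mem_posBlocks.2 ⟨hC, h⟩, Or.inl rfl⟩
  · exact ⟨negBlock C, mem_posBlocks.2 ⟨hπ.negBlock_mem hC, h⟩,
      Or.inr (negBlock_negBlock C).symm⟩

lemma exists_mem_posBlocks_of_mem (hπ : IsBnPartition n π) (hz : NoZeroBlock π)
    {y : ℤ} (hy : y ∈ pmSet n) : ∃ B ∈ posBlocks π, y ∈ B ∨ -y ∈ B := by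
  obtain ⟨C, ⟨hC, hyC⟩, -⟩ := hπ.existsUnique_mem hy
  obtain ⟨B, hB, rfl | rfl⟩ := hπ.exists_mem_posBlocks hz hC
  exacts [⟨C, hB, Or.inl hyC⟩, ⟨B, hB, Or.inr (mem_negBlock.1 hyC)⟩]

lemma neg_notMem_of_mem_posBlocks (hπ : IsBnPartition n π) (hB : B ∈ posBlocks π)
    (hB' : B' ∈ posBlocks π) {y : ℤ} (hy : y ∈ B) : -y ∉ B' := fun hy' =>
  ne_negBlock_of_mem_posBlocks hB hB' <| hπ.eq_of_mem_of_mem (posBlocks_subset hB)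
    (hπ.negBlock_mem (posBlocks_subset hB')) hy (mem_negBlock.2 hy')

lemma map_card_posBlocks (hπ : IsBnPartition n π) (hz : NoZeroBlock π) {k : ℕ}
    {i : Fin k → ℕ} (hbp : blockPairSizes π i) :
    (posBlocks π).val.map card = (List.ofFn i : Multiset ℕ) := by
  classical
  have hnot : π.filter (¬ IsPosBlock ·) = (posBlocks π).image negBlock := by
    ext C
    simp only [mem_filter, mem_image, mem_posBlocks]
    constructor
    · rintro ⟨hC, hnC⟩
      have hneg := (isPosBlock_or_negBlock (nonempty_iff_ne_empty.2 (hπ.ne_empty hC))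
        (hπ.disjoint_negBlock hz hC)).resolve_left hnC
      exact ⟨negBlock C, ⟨hπ.negBlock_mem hC, hneg⟩, negBlock_negBlock C⟩
    · rintro ⟨B, ⟨hB, hpos⟩, rfl⟩
      exact ⟨hπ.negBlock_mem hB, hpos.not_negBlock⟩
  have hdouble :
      π.val.map card = (posBlocks π).val.map card + (posBlocks π).val.map card := by
    conv_lhs => rw [← Multiset.filter_add_not IsPosBlock π.val, Multiset.map_add]
    rw [← filter_val, ← filter_val, hnot, image_val_of_injOn negBlock_injective.injOn,
      Multiset.map_map]
    simp only [Function.comp_def, card_negBlock]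
    rfl
  rw [blockPairSizes, filter_true_of_mem hz, hdouble] at hbp
  ext x
  have := congrArg (Multiset.count x) hbp
  simp only [Multiset.count_add] at this
  omega

lemma prod_card_posBlocks {M : Type*} [CommMonoid M] (hπ : IsBnPartition n π)
    (hz : NoZeroBlock π) {k : ℕ} {i : Fin k → ℕ} (hbp : blockPairSizes π i)
    (f : ℕ → M) :
    ∏ B ∈ posBlocks π, f #B = ∏ α, f (i α) := by
  rw [prod_eq_multiset_prod, ← Function.comp_def f card, ← Multiset.map_map,
    hπ.map_card_posBlocks hz hbp, Multiset.map_coe,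
    Multiset.prod_coe, List.map_ofFn, List.prod_ofFn]
  rfl

end IsBnPartition

section Placement

variable {j : ℕ}

def flipSign (p : Fin j × Bool) : Fin j × Bool := (p.1, !p.2)

@[simp]
lemma flipSign_flipSign (p : Fin j × Bool) : flipSign (flipSign p) = p := by
  simp [flipSign]

lemma flipSign_ne (p : Fin j × Bool) : flipSign p ≠ p := by
  simp [flipSign, Prod.ext_iff]

lemma eq_or_eq_flipSign_of_fst_eq {p q : Fin j × Bool} (h : q.1 = p.1) :
    q = p ∨ q = flipSign p := by
  obtain ⟨s, b⟩ := p
  obtain ⟨s', b'⟩ := q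
  cases h
  cases b <;> cases b' <;> simp [flipSign]

/-- The boxes `+s` and `-s` are `(s, true)` and `(s, false)`. -/
def signedBox (v : Fin j → Finset ℤ) (p : Fin j × Bool) : Finset ℤ :=
  if p.2 then v p.1 else negBlock (v p.1)

lemma signedBox_flipSign (v : Fin j → Finset ℤ) (p : Fin j × Bool) :
    signedBox v (flipSign p) = negBlock (signedBox v p) := by
  obtain ⟨s, b⟩ := p
  cases b <;> simp [signedBox, flipSign]

lemma neg_mem_signedBox_flipSign {v : Fin j → Finset ℤ} {x : ℤ} {p : Fin j × Bool}
    (h : x ∈ signedBox v p) : -x ∈ signedBox v (flipSign p) := by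
  rwa [signedBox_flipSign, mem_negBlock, neg_neg]

lemma apply_eq_of_signedBox_eq {v w : Fin j → Finset ℤ} {p : Fin j × Bool}
    (h : signedBox v p = signedBox w p) : v p.1 = w p.1 := by
  obtain ⟨s, b⟩ := p
  cases b
  exacts [negBlock_injective h, h]

structure IsPlacement (n : ℕ) (π : Finset (Finset ℤ)) (v : Fin j → Finset ℤ) : Prop where
  subset_pmSet : ∀ s, v s ⊆ pmSet n
  existsUnique_mem_signedBox : ∀ x ∈ pmSet n, ∃! p, x ∈ signedBox v p
  card_inter_signedBox_le : ∀ B ∈ π, ∀ p, #(B ∩ signedBox v p) ≤ 1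

namespace IsPlacement

variable {v : Fin j → Finset ℤ}

lemma signedBox_subset (hv : IsPlacement n π v) (p : Fin j × Bool) :
    signedBox v p ⊆ pmSet n := by
  unfold signedBox
  split_ifs
  exacts [hv.subset_pmSet _, negBlock_subset_pmSet (hv.subset_pmSet _)]

lemma eq_of_mem_signedBox (hv : IsPlacement n π v) {x : ℤ} {p q : Fin j × Bool}
    (hp : x ∈ signedBox v p) (hq : x ∈ signedBox v q) : p = q :=
  (hv.existsUnique_mem_signedBox x (hv.signedBox_subset p hp)).unique hp hq

lemma eq_of_signedBox_eq (hv : IsPlacement n π v) {p q : Fin j × Bool}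
    (h : signedBox v p = signedBox v q) (hne : signedBox v p ≠ ∅) : p = q := by
  obtain ⟨x, hx⟩ := nonempty_iff_ne_empty.2 hne
  exact hv.eq_of_mem_signedBox hx (h ▸ hx)

end IsPlacement

open Classical in
noncomputable def placements (n : ℕ) (π : Finset (Finset ℤ)) (j : ℕ) :
    Finset (Fin j → Finset ℤ) :=
  (Fintype.piFinset fun _ => (pmSet n).powerset).filter (IsPlacement n π)

lemma mem_placements {v : Fin j → Finset ℤ} :
    v ∈ placements n π j ↔ IsPlacement n π v := by
  classical
  simp only [placements, mem_filter, Fintype.mem_piFinset, mem_powerset, and_iff_right_iff_imp]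
  exact fun hv => hv.subset_pmSet

open Classical in
noncomputable def boxPartition (v : Fin j → Finset ℤ) : Finset (Finset ℤ) :=
  (univ.image (signedBox v)).filter (· ≠ ∅)

lemma mem_boxPartition {v : Fin j → Finset ℤ} :
    C ∈ boxPartition v ↔ (∃ p, signedBox v p = C) ∧ C ≠ ∅ := by
  classical
  simp [boxPartition]

end Placement

open Classical in
noncomputable def minIntPartners (n : ℕ) (π : Finset (Finset ℤ)) :
    Finset (Finset (Finset ℤ)) :=
  (pmSet n).powerset.powerset.filter fun π' =>
    IsBnPartition n π' ∧ NoZeroBlock π' ∧ MinInt n π π'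

lemma coe_minIntPartners :
    (minIntPartners n π : Set (Finset (Finset ℤ)))
      = {π' | IsBnPartition n π' ∧ NoZeroBlock π' ∧ MinInt n π π'} := by
  classical
  ext π'
  simp only [minIntPartners, coe_filter, mem_powerset, Set.mem_ofPred_eq,
    and_iff_right_iff_imp]
  exact fun h _ hB => mem_powerset.2 (h.1.subset_pmSet hB)

lemma mem_minIntPartners :
    π' ∈ minIntPartners n π ↔
      IsBnPartition n π' ∧ NoZeroBlock π' ∧ MinInt n π π' := by
  rw [← mem_coe, coe_minIntPartners, Set.mem_ofPred_eq]

lemma IsPlacement.boxPartition_mem_minIntPartners {j : ℕ} {v : Fin j → Finset ℤ}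
    (hπ : IsBnPartition n π) (hv : IsPlacement n π v) :
    boxPartition v ∈ minIntPartners n π := by
  have hnz : NoZeroBlock (boxPartition v) := by
    intro C hC hCC
    obtain ⟨⟨p, rfl⟩, hne⟩ := mem_boxPartition.1 hC
    exact flipSign_ne p <|
      hv.eq_of_signedBox_eq (by rw [signedBox_flipSign, hCC]) (by rwa [signedBox_flipSign, hCC])
  have hBn : IsBnPartition n (boxPartition v) := by
    refine ⟨fun C hC => (mem_boxPartition.1 hC).2, ?_, ?_, ?_, ?_⟩
    · intro C hC
      obtain ⟨⟨p, rfl⟩, -⟩ := mem_boxPartition.1 hC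
      exact hv.signedBox_subset p
    · intro x hx
      obtain ⟨p, hp, hp'⟩ := hv.existsUnique_mem_signedBox x hx
      refine
        ⟨signedBox v p, ⟨mem_boxPartition.2 ⟨⟨p, rfl⟩, ne_empty_of_mem hp⟩, hp⟩, ?_⟩
      rintro C ⟨hC, hxC⟩
      obtain ⟨⟨q, rfl⟩, -⟩ := mem_boxPartition.1 hC
      rw [hp' q hxC]
    · intro C hC
      obtain ⟨⟨p, rfl⟩, hne⟩ := mem_boxPartition.1 hC
      exact mem_boxPartition.2
        ⟨⟨flipSign p, signedBox_flipSign v p⟩, by rwa [Ne, negBlock_eq_empty]⟩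
    · classical
      rw [filter_false_of_mem hnz, card_empty]
      exact zero_le_one
  refine mem_minIntPartners.2 ⟨hBn, hnz, (hπ.minInt_iff hBn).2 fun B hB C hC => ?_⟩
  obtain ⟨⟨p, rfl⟩, -⟩ := mem_boxPartition.1 hC
  exact hv.card_inter_signedBox_le B hB p

section Labelling

variable {j : ℕ} {v : Fin j → Finset ℤ}

namespace IsPlacement

noncomputable def labelling (hv : IsPlacement n π v) (hπ : IsBnPartition n π)
    (B : posBlocks π) : B.1 ↪ Fin j × Bool where
  toFun x :=
    (hv.existsUnique_mem_signedBox x (hπ.subset_pmSet (posBlocks_subset B.2) x.2)).exists.choose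
  inj' x y hxy := by
    have hB := posBlocks_subset B.2
    have hx := (hv.existsUnique_mem_signedBox x (hπ.subset_pmSet hB x.2)).exists.choose_spec
    have hy := (hv.existsUnique_mem_signedBox y (hπ.subset_pmSet hB y.2)).exists.choose_spec
    simp only at hxy
    rw [← hxy] at hy
    exact Subtype.ext <| card_le_one.1 (hv.card_inter_signedBox_le B.1 hB _) x
      (mem_inter.2 ⟨x.2, hx⟩) y (mem_inter.2 ⟨y.2, hy⟩)

lemma mem_signedBox_labelling (hv : IsPlacement n π v) (hπ : IsBnPartition n π)
    {B : posBlocks π} (x : B.1) : x.1 ∈ signedBox v (hv.labelling hπ B x) :=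
  (hv.existsUnique_mem_signedBox x (hπ.subset_pmSet (posBlocks_subset B.2) x.2)).exists.choose_spec

lemma labelling_eq (hv : IsPlacement n π v) (hπ : IsBnPartition n π) {B : posBlocks π}
    {x : B.1} {p : Fin j × Bool} (hp : x.1 ∈ signedBox v p) : hv.labelling hπ B x = p :=
  hv.eq_of_mem_signedBox (hv.mem_signedBox_labelling hπ x) hp

end IsPlacement

open Classical in
noncomputable def placementOfLabelling (g : ∀ B : posBlocks π, B.1 ↪ Fin j × Bool)
    (s : Fin j) : Finset ℤ :=
  (posBlocks π).attach.biUnion fun B =>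
    B.1.filter (fun y => ∃ hy : y ∈ B.1, g B ⟨y, hy⟩ = (s, true)) ∪
      negBlock (B.1.filter fun y => ∃ hy : y ∈ B.1, g B ⟨y, hy⟩ = (s, false))

variable {g : ∀ B : posBlocks π, B.1 ↪ Fin j × Bool}

lemma mem_signedBox_placementOfLabelling {p : Fin j × Bool} {y : ℤ} :
    y ∈ signedBox (placementOfLabelling g) p ↔ ∃ B : posBlocks π,
      (∃ hy : y ∈ B.1, g B ⟨y, hy⟩ = p) ∨
        (∃ hy : -y ∈ B.1, g B ⟨-y, hy⟩ = flipSign p) := by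
  obtain ⟨s, b⟩ := p
  cases b
  · simp [signedBox, placementOfLabelling, mem_negBlock, flipSign, and_exists_self]
    exact exists₂_congr fun _ _ => or_comm
  · simp [signedBox, placementOfLabelling, mem_negBlock, flipSign, and_exists_self]

lemma apply_eq_of_mem_signedBox_placementOfLabelling (hπ : IsBnPartition n π)
    {B : posBlocks π} {x : ℤ} (hx : x ∈ B.1) {p : Fin j × Bool}
    (h : x ∈ signedBox (placementOfLabelling g) p) : g B ⟨x, hx⟩ = p := by
  obtain ⟨B', ⟨hx', hg⟩ | ⟨hx', -⟩⟩ := mem_signedBox_placementOfLabelling.1 h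
  · obtain rfl : B' = B :=
      Subtype.ext (hπ.eq_of_mem_of_mem (posBlocks_subset B'.2) (posBlocks_subset B.2) hx' hx)
    exact hg
  · exact absurd hx' (hπ.neg_notMem_of_mem_posBlocks B.2 B'.2 hx)

lemma isPlacement_placementOfLabelling (hπ : IsBnPartition n π) (hz : NoZeroBlock π)
    (g : ∀ B : posBlocks π, B.1 ↪ Fin j × Bool) :
    IsPlacement n π (placementOfLabelling g) := by
  have hsub (B : posBlocks π) : B.1 ⊆ pmSet n := hπ.subset_pmSet (posBlocks_subset B.2)
  refine ⟨fun s y hy => ?_, fun y hy => ?_, fun C hC p => ?_⟩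
  · obtain ⟨B, ⟨hyB, -⟩ | ⟨hyB, -⟩⟩ :=
      mem_signedBox_placementOfLabelling.1 (show y ∈ signedBox _ (s, true) from hy)
    exacts [hsub B hyB, neg_mem_pmSet.1 (hsub B hyB)]
  · obtain ⟨B, hB, hyB | hyB⟩ := hπ.exists_mem_posBlocks_of_mem hz hy
    · refine ⟨g ⟨B, hB⟩ ⟨y, hyB⟩, mem_signedBox_placementOfLabelling.2
        ⟨⟨B, hB⟩, Or.inl ⟨hyB, rfl⟩⟩, fun q hq => ?_⟩
      exact (apply_eq_of_mem_signedBox_placementOfLabelling hπ hyB hq).symm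
    · refine ⟨flipSign (g ⟨B, hB⟩ ⟨-y, hyB⟩), mem_signedBox_placementOfLabelling.2
        ⟨⟨B, hB⟩, Or.inr ⟨hyB, (flipSign_flipSign _).symm⟩⟩, fun q hq => ?_⟩
      rw [apply_eq_of_mem_signedBox_placementOfLabelling hπ hyB
        (neg_mem_signedBox_flipSign hq), flipSign_flipSign]
  · rw [card_le_one]
    intro x hx y hy
    rw [mem_inter] at hx hy
    obtain ⟨B, hB, rfl | rfl⟩ := hπ.exists_mem_posBlocks hz hC
    · have := (apply_eq_of_mem_signedBox_placementOfLabelling hπ (B := ⟨C, hB⟩) hx.1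
        hx.2).trans
        (apply_eq_of_mem_signedBox_placementOfLabelling hπ (B := ⟨C, hB⟩) hy.1 hy.2).symm
      exact congrArg Subtype.val ((g _).injective this)
    · rw [mem_negBlock] at hx hy
      have := (apply_eq_of_mem_signedBox_placementOfLabelling hπ (B := ⟨B, hB⟩) hx.1
        (neg_mem_signedBox_flipSign hx.2)).trans
        (apply_eq_of_mem_signedBox_placementOfLabelling hπ (B := ⟨B, hB⟩) hy.1
          (neg_mem_signedBox_flipSign hy.2)).symm
      exact neg_injective (congrArg Subtype.val ((g _).injective this))

lemma IsPlacement.placementOfLabelling_labelling (hπ : IsBnPartition n π) (hz : NoZeroBlock π)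
    (hv : IsPlacement n π v) : placementOfLabelling (hv.labelling hπ) = v := by
  funext s
  ext y
  change y ∈ signedBox (placementOfLabelling (hv.labelling hπ)) (s, true) ↔
    y ∈ signedBox v (s, true)
  rw [mem_signedBox_placementOfLabelling]
  constructor
  · rintro ⟨B, ⟨hyB, hp⟩ | ⟨hyB, hp⟩⟩
    · exact hp ▸ hv.mem_signedBox_labelling hπ ⟨y, hyB⟩
    · have h := neg_mem_signedBox_flipSign (hv.mem_signedBox_labelling hπ ⟨-y, hyB⟩)
      simpa only [hp, flipSign_flipSign, neg_neg] using h
  · intro hy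
    obtain ⟨B, hB, hyB | hyB⟩ := hπ.exists_mem_posBlocks_of_mem hz (hv.signedBox_subset _ hy)
    · exact ⟨⟨B, hB⟩, Or.inl ⟨hyB, hv.labelling_eq hπ hy⟩⟩
    · exact
        ⟨⟨B, hB⟩, Or.inr ⟨hyB, hv.labelling_eq hπ (neg_mem_signedBox_flipSign hy)⟩⟩

lemma labelling_placementOfLabelling (hπ : IsBnPartition n π)
    (hv : IsPlacement n π (placementOfLabelling g)) : hv.labelling hπ = g :=
  funext fun B => Function.Embedding.ext fun x =>
    hv.labelling_eq hπ (mem_signedBox_placementOfLabelling.2 ⟨B, Or.inl ⟨x.2, rfl⟩⟩)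

noncomputable def placementsEquivLabellings (hπ : IsBnPartition n π) (hz : NoZeroBlock π)
    (j : ℕ) : placements n π j ≃ ∀ B : posBlocks π, B.1 ↪ Fin j × Bool where
  toFun v := (mem_placements.1 v.2).labelling hπ
  invFun g :=
    ⟨placementOfLabelling g, mem_placements.2 (isPlacement_placementOfLabelling hπ hz g)⟩
  left_inv v := Subtype.ext ((mem_placements.1 v.2).placementOfLabelling_labelling hπ hz)
  right_inv _ := labelling_placementOfLabelling hπ _

lemma card_placements (hπ : IsBnPartition n π) (hz : NoZeroBlock π) (j : ℕ) :
    #(placements n π j) = ∏ B ∈ posBlocks π, (2 * j).descFactorial #B := by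
  classical
  rw [card_eq_of_equiv_fintype (placementsEquivLabellings hπ hz j), Fintype.card_pi,
    ← prod_coe_sort (posBlocks π) fun B => (2 * j).descFactorial #B]
  refine Fintype.prod_congr _ _ fun B => ?_
  rw [Fintype.card_embedding_eq, Fintype.card_prod, Fintype.card_fin, Fintype.card_bool,
    Fintype.card_coe, mul_comm]

end Labelling

section Assignment

variable {j : ℕ} (e : posBlocks π' ↪ Fin j) (σ : posBlocks π' → Bool)

noncomputable def placementOfAssignment : Fin j → Finset ℤ :=
  Function.extend e (fun B => if σ B then B.1 else negBlock B.1) fun _ => ∅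

variable {e σ}

lemma signedBox_placementOfAssignment_self (B : posBlocks π') :
    signedBox (placementOfAssignment e σ) (e B, σ B) = B.1 := by
  simp only [signedBox, placementOfAssignment, e.injective.extend_apply]
  cases σ B <;> simp

lemma signedBox_placementOfAssignment_flipSign (B : posBlocks π') :
    signedBox (placementOfAssignment e σ) (e B, !σ B) = negBlock B.1 := by
  rw [← signedBox_placementOfAssignment_self B, ← signedBox_flipSign]
  rfl

lemma signedBox_placementOfAssignment_of_notMem_range {p : Fin j × Bool}
    (hp : p.1 ∉ Set.range e) : signedBox (placementOfAssignment e σ) p = ∅ := by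
  simp [signedBox, placementOfAssignment, Function.extend_apply' _ _ _ hp]

lemma signedBox_placementOfAssignment_cases (p : Fin j × Bool) :
    signedBox (placementOfAssignment e σ) p = ∅ ∨ ∃ B : posBlocks π',
      (p = (e B, σ B) ∧ signedBox (placementOfAssignment e σ) p = B.1) ∨
      (p = (e B, !σ B) ∧ signedBox (placementOfAssignment e σ) p = negBlock B.1) := by
  obtain ⟨s, b⟩ := p
  by_cases hs : s ∈ Set.range e
  · obtain ⟨B, rfl⟩ := hs
    right
    refine ⟨B, ?_⟩
    by_cases hb : b = σ B
    · exact Or.inl ⟨by rw [hb], by rw [hb, signedBox_placementOfAssignment_self]⟩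
    · rw [Bool.eq_not.2 hb]
      exact Or.inr ⟨rfl, signedBox_placementOfAssignment_flipSign B⟩
  · exact Or.inl (signedBox_placementOfAssignment_of_notMem_range hs)

lemma signedBox_placementOfAssignment_mem (hπ' : IsBnPartition n π') {p : Fin j × Bool}
    (hne : signedBox (placementOfAssignment e σ) p ≠ ∅) :
    signedBox (placementOfAssignment e σ) p ∈ π' := by
  obtain h | ⟨B, ⟨-, h⟩ | ⟨-, h⟩⟩ :=
    signedBox_placementOfAssignment_cases (e := e) (σ := σ) p
  · exact absurd h hne
  · exact h ▸ posBlocks_subset B.2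
  · exact h ▸ hπ'.negBlock_mem (posBlocks_subset B.2)

lemma eq_of_signedBox_placementOfAssignment_eq {p q : Fin j × Bool}
    (h : signedBox (placementOfAssignment e σ) p = signedBox (placementOfAssignment e σ) q)
    (hne : signedBox (placementOfAssignment e σ) p ≠ ∅) : p = q := by
  obtain hp | ⟨B, ⟨rfl, hp⟩ | ⟨rfl, hp⟩⟩ :=
    signedBox_placementOfAssignment_cases (e := e) (σ := σ) p
  · exact absurd hp hne
  all_goals
    obtain hq | ⟨B', ⟨rfl, hq⟩ | ⟨rfl, hq⟩⟩ :=
      signedBox_placementOfAssignment_cases (e := e) (σ := σ) q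
    · exact absurd (h.trans hq) hne
  all_goals rw [hp, hq] at h
  · rw [Subtype.ext h]
  · exact absurd h (ne_negBlock_of_mem_posBlocks B.2 B'.2)
  · exact absurd h.symm (ne_negBlock_of_mem_posBlocks B'.2 B.2)
  · rw [Subtype.ext (negBlock_injective h)]

lemma exists_signedBox_placementOfAssignment_eq (hπ' : IsBnPartition n π')
    (hz' : NoZeroBlock π') (hC : C ∈ π') :
    ∃ p, signedBox (placementOfAssignment e σ) p = C := by
  obtain ⟨B, hB, rfl | rfl⟩ := hπ'.exists_mem_posBlocks hz' hC
  exacts [⟨_, signedBox_placementOfAssignment_self ⟨C, hB⟩⟩,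
    ⟨_, signedBox_placementOfAssignment_flipSign ⟨B, hB⟩⟩]

lemma isPlacement_placementOfAssignment (hπ : IsBnPartition n π) (hπ' : IsBnPartition n π')
    (hz' : NoZeroBlock π') (hmin : MinInt n π π') (e : posBlocks π' ↪ Fin j)
    (σ : posBlocks π' → Bool) : IsPlacement n π (placementOfAssignment e σ) := by
  set v := placementOfAssignment e σ
  have mem_or_empty (p : Fin j × Bool) : signedBox v p ∈ π' ∨ signedBox v p = ∅ :=
    (em (signedBox v p = ∅)).elim Or.inr fun hne =>
      Or.inl (signedBox_placementOfAssignment_mem hπ' hne)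
  refine ⟨fun s => ?_, fun y hy => ?_, fun C hC p => ?_⟩
  · obtain h | h := mem_or_empty (s, true)
    · exact hπ'.subset_pmSet h
    · rw [show v s = ∅ from h]
      exact empty_subset _
  · obtain ⟨C, ⟨hC, hyC⟩, -⟩ := hπ'.existsUnique_mem hy
    obtain ⟨p, rfl⟩ := exists_signedBox_placementOfAssignment_eq (e := e) (σ := σ) hπ' hz' hC
    refine ⟨p, hyC, fun q hyq => ?_⟩
    have hq := (mem_or_empty q).resolve_right (ne_empty_of_mem hyq)
    exact eq_of_signedBox_placementOfAssignment_eq (hπ'.eq_of_mem_of_mem hq hC hyq hyC)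
      (ne_empty_of_mem hyq)
  · obtain h | h := mem_or_empty p
    · exact (hπ.minInt_iff hπ').1 hmin C hC _ h
    · simp [h]

lemma boxPartition_placementOfAssignment (hπ' : IsBnPartition n π') (hz' : NoZeroBlock π')
    (e : posBlocks π' ↪ Fin j) (σ : posBlocks π' → Bool) :
    boxPartition (placementOfAssignment e σ) = π' := by
  ext C
  rw [mem_boxPartition]
  constructor
  · rintro ⟨⟨p, rfl⟩, hne⟩
    exact signedBox_placementOfAssignment_mem hπ' hne
  · intro hC
    exact ⟨exists_signedBox_placementOfAssignment_eq hπ' hz' hC, hπ'.ne_empty hC⟩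

end Assignment

section Fiber

variable {j : ℕ} {v : Fin j → Finset ℤ}

noncomputable def boxOfBlock (hvπ' : boxPartition v = π') (B : posBlocks π') : Fin j × Bool :=
  (mem_boxPartition.1 (by rw [hvπ']; exact posBlocks_subset B.2)).1.choose

lemma signedBox_boxOfBlock (hvπ' : boxPartition v = π') (B : posBlocks π') :
    signedBox v (boxOfBlock hvπ' B) = B.1 :=
  (mem_boxPartition.1 (by rw [hvπ']; exact posBlocks_subset B.2)).1.choose_spec

lemma boxOfBlock_eq (hv : IsPlacement n π v) (hπ' : IsBnPartition n π')
    (hvπ' : boxPartition v = π') {B : posBlocks π'} {p : Fin j × Bool}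
    (hp : signedBox v p = B.1) : boxOfBlock hvπ' B = p := by
  refine hv.eq_of_signedBox_eq ((signedBox_boxOfBlock hvπ' B).trans hp.symm) ?_
  rw [signedBox_boxOfBlock]
  exact hπ'.ne_empty (posBlocks_subset B.2)

noncomputable def assignmentOfPlacement (hvπ' : boxPartition v = π') :
    (posBlocks π' ↪ Fin j) × (posBlocks π' → Bool) where
  fst.toFun B := (boxOfBlock hvπ' B).1
  fst.inj' B B' h := by
    obtain h | h := eq_or_eq_flipSign_of_fst_eq h
    · apply Subtype.ext
      rw [← signedBox_boxOfBlock hvπ' B, ← signedBox_boxOfBlock hvπ' B', h]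
    · refine absurd ?_ (ne_negBlock_of_mem_posBlocks B.2 B'.2)
      rw [← signedBox_boxOfBlock hvπ' B, h, signedBox_flipSign, signedBox_boxOfBlock]
  snd B := (boxOfBlock hvπ' B).2

lemma assignmentOfPlacement_placementOfAssignment (hπ : IsBnPartition n π)
    (hπ' : IsBnPartition n π') (hz' : NoZeroBlock π') (hmin : MinInt n π π')
    (e : posBlocks π' ↪ Fin j) (σ : posBlocks π' → Bool)
    (hvπ' : boxPartition (placementOfAssignment e σ) = π') :
    assignmentOfPlacement hvπ' = (e, σ) := by
  have hbox (B : posBlocks π') : boxOfBlock hvπ' B = (e B, σ B) :=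
    boxOfBlock_eq (isPlacement_placementOfAssignment hπ hπ' hz' hmin e σ) hπ' hvπ'
      (signedBox_placementOfAssignment_self B)
  exact Prod.ext (Function.Embedding.ext fun B => congrArg Prod.fst (hbox B))
    (funext fun B => congrArg Prod.snd (hbox B))

lemma placementOfAssignment_assignmentOfPlacement (hv : IsPlacement n π v)
    (hπ' : IsBnPartition n π') (hz' : NoZeroBlock π') (hvπ' : boxPartition v = π') :
    placementOfAssignment (assignmentOfPlacement hvπ').1 (assignmentOfPlacement hvπ').2
      = v := by
  set a := assignmentOfPlacement hvπ'
  funext s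
  by_cases hs : s ∈ Set.range a.1
  · obtain ⟨B, rfl⟩ := hs
    refine apply_eq_of_signedBox_eq (p := (a.1 B, a.2 B)) ?_
    rw [signedBox_placementOfAssignment_self, ← signedBox_boxOfBlock hvπ' B]
    rfl
  · rw [placementOfAssignment, Function.extend_apply' _ _ _ hs]
    by_contra hne
    have hvs : v s ∈ π' := hvπ' ▸ mem_boxPartition.2 ⟨⟨(s, true), rfl⟩, Ne.symm hne⟩
    obtain ⟨B, hB, hsB | hsB⟩ := hπ'.exists_mem_posBlocks hz' hvs
    · exact hs ⟨⟨B, hB⟩, congrArg Prod.fst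
        (boxOfBlock_eq (B := ⟨B, hB⟩) (p := (s, true)) hv hπ' hvπ' hsB)⟩
    · have hsB' : signedBox v (s, false) = B := by
        rw [signedBox, if_neg Bool.false_ne_true, hsB, negBlock_negBlock]
      exact hs ⟨⟨B, hB⟩, congrArg Prod.fst
        (boxOfBlock_eq (B := ⟨B, hB⟩) (p := (s, false)) hv hπ' hvπ' hsB')⟩

end Fiber

noncomputable def fiberEquivAssignments (hπ : IsBnPartition n π) (hπ' : IsBnPartition n π')
    (hz' : NoZeroBlock π') (hmin : MinInt n π π') (j : ℕ) :
    {v ∈ placements n π j | boxPartition v = π'} ≃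
      (posBlocks π' ↪ Fin j) × (posBlocks π' → Bool) where
  toFun v := assignmentOfPlacement (mem_filter.1 v.2).2
  invFun a := ⟨placementOfAssignment a.1 a.2, mem_filter.2
    ⟨mem_placements.2 (isPlacement_placementOfAssignment hπ hπ' hz' hmin a.1 a.2),
      boxPartition_placementOfAssignment hπ' hz' a.1 a.2⟩⟩
  left_inv v := Subtype.ext <| placementOfAssignment_assignmentOfPlacement
    (mem_placements.1 (mem_filter.1 v.2).1) hπ' hz' _
  right_inv a := assignmentOfPlacement_placementOfAssignment hπ hπ' hz' hmin a.1 a.2 _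

lemma card_placements_fiber (hπ : IsBnPartition n π) (h' : π' ∈ minIntPartners n π)
    (j : ℕ) :
    #{v ∈ placements n π j | boxPartition v = π'}
      = 2 ^ #(posBlocks π') * j.descFactorial #(posBlocks π') := by
  obtain ⟨hπ', hz', hmin⟩ := mem_minIntPartners.1 h'
  rw [card_eq_of_equiv_fintype (fiberEquivAssignments hπ hπ' hz' hmin j), Fintype.card_prod,
    Fintype.card_embedding_eq, Fintype.card_fun, Fintype.card_coe, Fintype.card_fin,
    Fintype.card_bool, mul_comm]

theorem prod_descFactorial_eq_sum_minIntPartners (hπ : IsBnPartition n π)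
    (hz : NoZeroBlock π) {k : ℕ} {i : Fin k → ℕ} (hbp : blockPairSizes π i) (j : ℕ) :
    ∏ α, (2 * j).descFactorial (i α)
      = ∑ π' ∈ minIntPartners n π,
          2 ^ #(posBlocks π') * j.descFactorial #(posBlocks π') := by
  rw [← hπ.prod_card_posBlocks hz hbp, ← card_placements hπ hz,
    card_eq_sum_card_fiberwise fun v hv =>
      (mem_placements.1 hv).boxPartition_mem_minIntPartners hπ]
  exact sum_congr rfl fun π' h' => card_placements_fiber hπ h' j

theorem hasSum_prod_descFactorial_div (hπ : IsBnPartition n π) (hz : NoZeroBlock π) {k : ℕ}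
    {i : Fin k → ℕ} (hbp : blockPairSizes π i) :
    HasSum (fun j => ((∏ α, (2 * j).descFactorial (i α) : ℕ) : ℝ) / (2 ^ j * j.factorial))
      (#(minIntPartners n π) * Real.exp (1 / 2)) := by
  have term (m : ℕ) :
      HasSum (fun j => (2 ^ m * j.descFactorial m : ℝ) / (2 ^ j * j.factorial))
        (Real.exp (1 / 2)) := by
    have h := (hasSum_descFactorial_mul_pow_div_factorial 2⁻¹ m).mul_left (2 ^ m)
    rw [← mul_assoc, ← mul_pow, mul_inv_cancel₀ two_ne_zero, one_pow, one_mul] at h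
    have hf : (fun j : ℕ => (2 ^ m * j.descFactorial m : ℝ) / (2 ^ j * j.factorial))
        = fun j => 2 ^ m * ((j.descFactorial m : ℝ) * 2⁻¹ ^ j / j.factorial) :=
      funext fun j => by rw [inv_pow]; ring
    rwa [hf, one_div]
  have := hasSum_sum fun π' (_ : π' ∈ minIntPartners n π) => term #(posBlocks π')
  rw [sum_const, nsmul_eq_mul] at this
  simpa only [prod_descFactorial_eq_sum_minIntPartners hπ hz hbp, Nat.cast_sum, Nat.cast_mul,
    Nat.cast_pow, Nat.cast_ofNat, sum_div] using this

end

theorem stmt7_general (n : ℕ) (k : ℕ) (i : Fin k → ℕ)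
    (π : Finset (Finset ℤ)) (hπ : IsBnPartition n π) (hz : NoZeroBlock π)
    (hbp : blockPairSizes π i) :
    Summable (fun j : ℕ =>
        (1 / ((2 : ℝ) ^ j * j.factorial)) *
          MvPolynomial.coeff (Finsupp.equivFunOnFinite.symm i)
            ((∏ α : Fin k, (1 + MvPolynomial.X α) ^ (2 * j)) : MvPolynomial (Fin k) ℝ)) ∧
    (Set.ncard {π' : Finset (Finset ℤ) |
        IsBnPartition n π' ∧ NoZeroBlock π' ∧ MinInt n π π'} : ℝ)
      = ((∏ α : Fin k, (i α).factorial : ℕ) : ℝ) / Real.sqrt (Real.exp 1)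
        * ∑' j : ℕ, (1 / ((2 : ℝ) ^ j * j.factorial)) *
            MvPolynomial.coeff (Finsupp.equivFunOnFinite.symm i)
              ((∏ α : Fin k, (1 + MvPolynomial.X α) ^ (2 * j)) : MvPolynomial (Fin k) ℝ) ∧
    (Set.ncard {π' : Finset (Finset ℤ) |
        IsBnPartition n π' ∧ NoZeroBlock π' ∧ MinInt n π π'} : ℝ)
      = ((∏ α : Fin k, (i α).factorial : ℕ) : ℝ) / Real.sqrt (Real.exp 1)
        * ∑' j : ℕ, (1 / ((2 : ℝ) ^ j * j.factorial)) *
            ∏ α : Fin k, ((2 * j).choose (i α) : ℝ) := by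
  have hcoeff (j : ℕ) : MvPolynomial.coeff (Finsupp.equivFunOnFinite.symm i)
      (∏ α, (1 + MvPolynomial.X α) ^ (2 * j) : MvPolynomial (Fin k) ℝ)
        = ∏ α, ((2 * j).choose (i α) : ℝ) :=
    MvPolynomial.coeff_prod_one_add_X_pow (fun _ => 2 * j) _
  have hsum :
      HasSum (fun j => 1 / ((2 : ℝ) ^ j * j.factorial) * ∏ α, ((2 * j).choose (i α) : ℝ))
        (#(minIntPartners n π) * Real.exp (1 / 2) / (∏ α, (i α).factorial : ℕ)) := by
    have hf : (fun j => 1 / ((2 : ℝ) ^ j * j.factorial) * ∏ α, ((2 * j).choose (i α) : ℝ))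
        = fun j => ((∏ α, (2 * j).descFactorial (i α) : ℕ) : ℝ) / (2 ^ j * j.factorial)
          / (∏ α, (i α).factorial : ℕ) := by
      funext j
      simp only [Nat.descFactorial_eq_factorial_mul_choose, prod_mul_distrib, Nat.cast_mul,
        Nat.cast_prod]
      field_simp
    rw [hf]
    exact (hasSum_prod_descFactorial_div hπ hz hbp).div_const _
  have hcard : (Set.ncard {π' | IsBnPartition n π' ∧ NoZeroBlock π' ∧ MinInt n π π'} : ℝ)
      = #(minIntPartners n π) := by
    rw [← coe_minIntPartners, Set.ncard_coe_finset]
  simp only [hcoeff, hsum.tsum_eq, hcard, ← Real.exp_half, and_self]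
  refine ⟨hsum.summable, ?_⟩
  field_simp

/-- The total number of zero-block-free `Bₙ`-partitions minimally intersecting a given
zero-block-free `Bₙ`-partition `π` of type `(i₁,…,i_k)`:
`N^D(π) = (𝐢!/√e) [x^𝐢] exp(½∏(1+xα)²)`, the exponential read as the convergent series
`Σ_j (1/(2j)!!) ∏(1+xα)^{2j}`; equivalently `N^D(π) = (𝐢!/√e) Σ_j (1/(2j)!!) ∏ C(2j, i_α)`. -/
theorem stmt7 (n : ℕ) (hn : 1 ≤ n) (k : ℕ) (hk : 1 ≤ k) (i : Fin k → ℕ)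
    (π : Finset (Finset ℤ)) (hπ : IsBnPartition n π) (hz : NoZeroBlock π)
    (hbp : blockPairSizes π i) :
    Summable (fun j : ℕ =>
        (1 / ((2 : ℝ) ^ j * j.factorial)) *
          MvPolynomial.coeff (Finsupp.equivFunOnFinite.symm i)
            ((∏ α : Fin k, (1 + MvPolynomial.X α) ^ (2 * j)) : MvPolynomial (Fin k) ℝ)) ∧
    (Set.ncard {π' : Finset (Finset ℤ) |
        IsBnPartition n π' ∧ NoZeroBlock π' ∧ MinInt n π π'} : ℝ)
      = ((∏ α : Fin k, (i α).factorial : ℕ) : ℝ) / Real.sqrt (Real.exp 1)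
        * ∑' j : ℕ, (1 / ((2 : ℝ) ^ j * j.factorial)) *
            MvPolynomial.coeff (Finsupp.equivFunOnFinite.symm i)
              ((∏ α : Fin k, (1 + MvPolynomial.X α) ^ (2 * j)) : MvPolynomial (Fin k) ℝ) ∧
    (Set.ncard {π' : Finset (Finset ℤ) |
        IsBnPartition n π' ∧ NoZeroBlock π' ∧ MinInt n π π'} : ℝ)
      = ((∏ α : Fin k, (i α).factorial : ℕ) : ℝ) / Real.sqrt (Real.exp 1)
        * ∑' j : ℕ, (1 / ((2 : ℝ) ^ j * j.factorial)) *
            ∏ α : Fin k, ((2 * j).choose (i α) : ℝ) :=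
  stmt7_general n k i π hπ hz hbp
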